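/- arXiv:2001.07925 — 4 statements merged into one kernel-verified Lean document; each statement's English description precedes it below -/
import Mathlib

section
/- Let (Γ, v_0) be a pointed graph satisfying conditions (S1) and (S2). Fix i_1, i_2, … ∈ I(Γ) and define left-iterated product coefficients c_m : I(Γ) → ℚ by c_1(k) = [k = i_1] and c_{m+1}(k) = Σ_{l ∈ I(Γ)} c_m(l) · p_{l, i_{m+1}}^k (a finitely supported sum). Then for every m ≥ 1 and every k ∈ I(Γ), c_m(k) = tilde p_{i_1,…,i_m}^k. (Equivalently, the left-iterated product ((⋯((x_{i_1} ∘ x_{i_2}) ∘ x_{i_3}) ⋯ ) ∘ x_{i_m}) in the pre-hypergroup derived from Γ equals J(i_1,…,i_m).) -/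
open scoped BigOperators

noncomputable section

/-- The Cayley graph of a group `G` with connection set `S`. -/
def cayley {G : Type*} [Group G] (S : Set G) : SimpleGraph G :=
  SimpleGraph.fromRel (fun v w => v⁻¹ * w ∈ S)

/-- The sphere of radius `n` around `v` in the graph `Γ`. -/
def gsphere {V : Type*} (Γ : SimpleGraph V) (v : V) (n : ℕ) : Set V :=
  {w | Γ.dist v w = n}

/-- `I(Γ, v₀)`: the set of distances realized from the base point `v₀`. -/
def idx {V : Type*} (Γ : SimpleGraph V) (v0 : V) : Set ℕ :=
  {n | (gsphere Γ v0 n).Nonempty}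

/-- The structure constants `p_{i,j}^k` of the (pre-)hypergroup derived from `(Γ, v₀)`. -/
noncomputable def structConst {V : Type*} (Γ : SimpleGraph V) (v0 : V) (i j k : ℕ) : ℚ :=
  (1 / ((gsphere Γ v0 i).ncard : ℚ)) *
    ∑ᶠ v ∈ gsphere Γ v0 i,
      ((gsphere Γ v j ∩ gsphere Γ v0 k).ncard : ℚ) / ((gsphere Γ v j).ncard : ℚ)

/-- `walkCoeff Γ v0 v [i₁,…,iₘ] k` is the coefficient `tilde p_{i₁,…,iₘ}^k` of a walk
starting at `v`: the probability that an `m`-step random walk `v → v₁ → ⋯ → vₘ` whose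
`j`-th step goes to a uniformly random vertex of `S_{i_j}(v_{j-1})` ends at distance `k`
from `v₀`. -/
noncomputable def walkCoeff {V : Type*} (Γ : SimpleGraph V) (v0 : V) :
    V → List ℕ → ℕ → ℚ
  | v, [], k => if Γ.dist v0 v = k then 1 else 0
  | v, i :: rest, k =>
      ∑ᶠ w ∈ gsphere Γ v i, walkCoeff Γ v0 w rest k / ((gsphere Γ v i).ncard : ℚ)

section Aux

variable {V : Type*} (Γ : SimpleGraph V) (v0 : V)

lemma dist_mem_idx (v : V) : Γ.dist v0 v ∈ idx Γ v0 := ⟨v, rfl⟩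

lemma walk_single (hfin : ∀ (v : V) (n : ℕ), (gsphere Γ v n).Finite) (v : V) (j k : ℕ) :
    walkCoeff Γ v0 v [j] k
      = ((gsphere Γ v j ∩ gsphere Γ v0 k).ncard : ℚ) / ((gsphere Γ v j).ncard : ℚ) := by
  classical
  simp only [walkCoeff]
  rw [finsum_mem_eq_finite_toFinset_sum _ (hfin v j)]
  have hset : gsphere Γ v j ∩ gsphere Γ v0 k
      = ↑((hfin v j).toFinset.filter (fun w => Γ.dist v0 w = k)) := by
    ext w
    simp [gsphere, Set.mem_inter_iff]
  rw [hset, Set.ncard_coe_finset]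
  rw [Finset.card_filter]
  push_cast
  rw [Finset.sum_div]

lemma structConst_eq (hfin : ∀ (v : V) (n : ℕ), (gsphere Γ v n).Finite)
    (hS1 : ∀ n ∈ idx Γ v0, ∀ v w : V, (gsphere Γ v n).ncard = (gsphere Γ w n).ncard)
    (hS2 : ∀ i ∈ idx Γ v0, ∀ j ∈ idx Γ v0, ∀ k ∈ idx Γ v0,
      ∀ v ∈ gsphere Γ v0 k, ∀ w ∈ gsphere Γ v0 k,
        (gsphere Γ v i ∩ gsphere Γ v0 j).ncard = (gsphere Γ w i ∩ gsphere Γ v0 j).ncard)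
    {l j : ℕ} (hl : l ∈ idx Γ v0) (hj : j ∈ idx Γ v0) (k : ℕ)
    {v : V} (hv : v ∈ gsphere Γ v0 l) :
    structConst Γ v0 l j k
      = ((gsphere Γ v j ∩ gsphere Γ v0 k).ncard : ℚ) / ((gsphere Γ v j).ncard : ℚ) := by
  classical
  unfold structConst
  have hconst : ∀ u ∈ gsphere Γ v0 l,
      ((gsphere Γ u j ∩ gsphere Γ v0 k).ncard : ℚ) / ((gsphere Γ u j).ncard : ℚ)
        = ((gsphere Γ v j ∩ gsphere Γ v0 k).ncard : ℚ) / ((gsphere Γ v j).ncard : ℚ) := by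
    intro u hu
    by_cases hk : k ∈ idx Γ v0
    · rw [hS2 j hj k hk l hl u hu v hv, hS1 j hj u v]
    · have hk' : gsphere Γ v0 k = ∅ := Set.not_nonempty_iff_eq_empty.mp hk
      simp [hk']
  rw [finsum_mem_congr rfl hconst]
  rw [finsum_mem_eq_finite_toFinset_sum _ (hfin v0 l), Finset.sum_const]
  rw [nsmul_eq_mul]
  have hcard : ((hfin v0 l).toFinset.card : ℚ) = ((gsphere Γ v0 l).ncard : ℚ) := by
    rw [Set.ncard_eq_toFinset_card _ (hfin v0 l)]
  have hne : ((gsphere Γ v0 l).ncard : ℚ) ≠ 0 := by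
    have : 0 < (gsphere Γ v0 l).ncard := (Set.ncard_pos (hfin v0 l)).mpr hl
    exact_mod_cast this.ne'
  rw [hcard]
  field_simp

lemma walk_support (hfin : ∀ (v : V) (n : ℕ), (gsphere Γ v n).Finite) :
    ∀ (L : List ℕ) (v : V),
      (Function.support (fun k => walkCoeff Γ v0 v L k)).Finite := by
  intro L
  induction L with
  | nil =>
    intro v
    apply Set.Finite.subset (Set.finite_singleton (Γ.dist v0 v))
    intro k hk
    simp only [Function.mem_support, walkCoeff] at hk
    by_contra h
    simp only [Set.mem_singleton_iff] at h
    exact hk (if_neg (fun he => h he.symm))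
  | cons i0 rest ih =>
    intro v
    apply Set.Finite.subset
      ((hfin v i0).biUnion (fun w _ => ih w))
    intro k hk
    simp only [Function.mem_support, walkCoeff] at hk
    by_contra h
    apply hk
    apply finsum_mem_eq_zero_of_forall_eq_zero
    intro w hw
    have : walkCoeff Γ v0 w rest k = 0 := by
      by_contra h0
      exact h (Set.mem_biUnion hw h0)
    simp [this]

lemma walk_append (hfin : ∀ (v : V) (n : ℕ), (gsphere Γ v n).Finite)
    (hS1 : ∀ n ∈ idx Γ v0, ∀ v w : V, (gsphere Γ v n).ncard = (gsphere Γ w n).ncard)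
    (hS2 : ∀ i ∈ idx Γ v0, ∀ j ∈ idx Γ v0, ∀ k ∈ idx Γ v0,
      ∀ v ∈ gsphere Γ v0 k, ∀ w ∈ gsphere Γ v0 k,
        (gsphere Γ v i ∩ gsphere Γ v0 j).ncard = (gsphere Γ w i ∩ gsphere Γ v0 j).ncard) :
    ∀ (L : List ℕ) (v : V) {j : ℕ}, j ∈ idx Γ v0 → ∀ k : ℕ,
      walkCoeff Γ v0 v (L ++ [j]) k
        = ∑ᶠ l ∈ idx Γ v0, walkCoeff Γ v0 v L l * structConst Γ v0 l j k := by
  intro L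
  induction L with
  | nil =>
    intro v j hj k
    classical
    rw [List.nil_append, walk_single Γ v0 hfin v j k,
      ← structConst_eq Γ v0 hfin hS1 hS2 (dist_mem_idx Γ v0 v) hj k
        (rfl : Γ.dist v0 v = Γ.dist v0 v)]
    symm
    rw [finsum_mem_eq_sum_of_subset _ (t := {Γ.dist v0 v}) ?_ ?_]
    · simp [walkCoeff]
    · rintro l ⟨_, hls⟩
      simp only [Function.mem_support, walkCoeff] at hls
      simp only [Finset.coe_singleton, Set.mem_singleton_iff]
      by_contra h
      exact hls (by rw [if_neg (fun he => h he.symm), zero_mul])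
    · intro l hl
      simp only [Finset.coe_singleton, Set.mem_singleton_iff] at hl
      rw [hl]
      exact dist_mem_idx Γ v0 v
  | cons i0 rest ih =>
    intro v j hj k
    classical
    have hTfin : (⋃ w ∈ gsphere Γ v i0,
        Function.support (fun l => walkCoeff Γ v0 w rest l)).Finite :=
      (hfin v i0).biUnion (fun w _ => walk_support Γ v0 hfin rest w)
    set T' : Finset ℕ := hTfin.toFinset.filter (· ∈ idx Γ v0) with hT'
    have key : ∀ w ∈ gsphere Γ v i0,
        walkCoeff Γ v0 w (rest ++ [j]) k
          = ∑ l ∈ T', walkCoeff Γ v0 w rest l * structConst Γ v0 l j k := by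
      intro w hw
      rw [ih w hj k]
      apply finsum_mem_eq_sum_of_subset
      · rintro l ⟨hlidx, hls⟩
        simp only [Function.mem_support] at hls
        have h0 : walkCoeff Γ v0 w rest l ≠ 0 := fun h => hls (by rw [h, zero_mul])
        simp only [hT', Finset.coe_filter, Set.mem_setOf_eq]
        refine ⟨?_, hlidx⟩
        rw [Set.Finite.mem_toFinset]
        exact Set.mem_biUnion hw h0
      · intro l hl
        exact (Finset.mem_filter.mp hl).2
    have hLHS : walkCoeff Γ v0 v ((i0 :: rest) ++ [j]) k
        = ∑ l ∈ T', ∑ w ∈ (hfin v i0).toFinset,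
            walkCoeff Γ v0 w rest l * structConst Γ v0 l j k
              / ((gsphere Γ v i0).ncard : ℚ) := by
      show (∑ᶠ w ∈ gsphere Γ v i0,
          walkCoeff Γ v0 w (rest ++ [j]) k / ((gsphere Γ v i0).ncard : ℚ)) = _
      rw [finsum_mem_eq_finite_toFinset_sum _ (hfin v i0)]
      rw [show (∑ w ∈ (hfin v i0).toFinset,
            walkCoeff Γ v0 w (rest ++ [j]) k / ((gsphere Γ v i0).ncard : ℚ))
          = ∑ w ∈ (hfin v i0).toFinset, ∑ l ∈ T',
              walkCoeff Γ v0 w rest l * structConst Γ v0 l j k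
                / ((gsphere Γ v i0).ncard : ℚ) from
        Finset.sum_congr rfl (fun w hw => by
          rw [key w ((hfin v i0).mem_toFinset.mp hw), Finset.sum_div])]
      exact Finset.sum_comm
    have hRHS : (∑ᶠ l ∈ idx Γ v0,
          walkCoeff Γ v0 v (i0 :: rest) l * structConst Γ v0 l j k)
        = ∑ l ∈ T', ∑ w ∈ (hfin v i0).toFinset,
            walkCoeff Γ v0 w rest l * structConst Γ v0 l j k
              / ((gsphere Γ v i0).ncard : ℚ) := by
      rw [finsum_mem_eq_sum_of_subset _ ?_ ?_]
      · apply Finset.sum_congr rfl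
        intro l _
        show (∑ᶠ w ∈ gsphere Γ v i0,
            walkCoeff Γ v0 w rest l / ((gsphere Γ v i0).ncard : ℚ))
              * structConst Γ v0 l j k = _
        rw [finsum_mem_eq_finite_toFinset_sum _ (hfin v i0), Finset.sum_mul]
        apply Finset.sum_congr rfl
        intro w _
        rw [div_mul_eq_mul_div]
      · rintro l ⟨hlidx, hls⟩
        simp only [Function.mem_support] at hls
        have h0 : walkCoeff Γ v0 v (i0 :: rest) l ≠ 0 := fun h => hls (by rw [h, zero_mul])
        have hex : ∃ w ∈ gsphere Γ v i0, walkCoeff Γ v0 w rest l ≠ 0 := by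
          by_contra hcon
          push_neg at hcon
          apply h0
          show (∑ᶠ w ∈ gsphere Γ v i0,
            walkCoeff Γ v0 w rest l / ((gsphere Γ v i0).ncard : ℚ)) = 0
          apply finsum_mem_eq_zero_of_forall_eq_zero
          intro w hw
          rw [hcon w hw, zero_div]
        obtain ⟨w, hw, hw0⟩ := hex
        simp only [hT', Finset.coe_filter, Set.mem_setOf_eq]
        refine ⟨?_, hlidx⟩
        rw [Set.Finite.mem_toFinset]
        exact Set.mem_biUnion hw hw0
      · intro l hl
        exact (Finset.mem_filter.mp hl).2
    rw [hLHS, hRHS]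

end Aux

/-- for a pointed graph satisfying (S1) and (S2), the left-iterated product
coefficients defined by `c₀(k) = [k = i₀]`, `c_{m+1}(k) = Σ_{l ∈ I(Γ)} c_m(l) p_{l,i_{m+1}}^k`
agree with `tilde p_{i₀,…,i_m}^k` (i.e. `PL(i₀,…,i_m) = J(i₀,…,i_m)`). -/


theorem iterated_product_eq_walkCoeff {V : Type*} (Γ : SimpleGraph V) (v0 : V)
    (hconn : Γ.Connected) (hfin : ∀ (v : V) (n : ℕ), (gsphere Γ v n).Finite)
    (hne : ∀ v : V, ∀ n ∈ idx Γ v0, (gsphere Γ v n).Nonempty)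
    (hS1 : ∀ n ∈ idx Γ v0, ∀ v w : V, (gsphere Γ v n).ncard = (gsphere Γ w n).ncard)
    (hS2 : ∀ i ∈ idx Γ v0, ∀ j ∈ idx Γ v0, ∀ k ∈ idx Γ v0,
      ∀ v ∈ gsphere Γ v0 k, ∀ w ∈ gsphere Γ v0 k,
        (gsphere Γ v i ∩ gsphere Γ v0 j).ncard = (gsphere Γ w i ∩ gsphere Γ v0 j).ncard)
    (i : ℕ → ℕ) (hi : ∀ m, i m ∈ idx Γ v0)
    (c : ℕ → ℕ → ℚ)
    (hc0 : ∀ k, c 0 k = if k = i 0 then 1 else 0)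
    (hcrec : ∀ m k, c (m + 1) k
      = ∑ᶠ l ∈ idx Γ v0, c m l * structConst Γ v0 l (i (m + 1)) k) :
    ∀ m : ℕ, ∀ k ∈ idx Γ v0,
      c m k = walkCoeff Γ v0 v0 (List.ofFn (fun j : Fin (m + 1) => i j)) k := by
  intro m
  induction m with
  | zero =>
    intro k _
    have hlist : List.ofFn (fun j : Fin 1 => i (j : ℕ)) = [i 0] := by
      simp [List.ofFn_succ]
    rw [hlist, hc0 k, walk_single Γ v0 hfin v0 (i 0) k]
    by_cases h : k = i 0
    · rw [if_pos h, h, Set.inter_self]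
      have hne0 : ((gsphere Γ v0 (i 0)).ncard : ℚ) ≠ 0 := by
        have : 0 < (gsphere Γ v0 (i 0)).ncard := (Set.ncard_pos (hfin v0 (i 0))).mpr (hi 0)
        exact_mod_cast this.ne'
      rw [div_self hne0]
    · rw [if_neg h]
      have hempty : gsphere Γ v0 (i 0) ∩ gsphere Γ v0 k = ∅ := by
        ext w
        simp only [Set.mem_inter_iff, Set.mem_empty_iff_false, iff_false, not_and]
        intro h1 h2
        exact h (h2 ▸ h1 ▸ rfl)
      rw [hempty]
      simp
  | succ m ihm =>
    intro k hk
    have hlist : List.ofFn (fun j : Fin (m + 1 + 1) => i (j : ℕ))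
        = (List.ofFn fun j : Fin (m + 1) => i (j : ℕ)) ++ [i (m + 1)] := by
      rw [List.ofFn_succ', List.concat_eq_append]
      simp
    rw [hlist, walk_append Γ v0 hfin hS1 hS2 _ v0 (hi (m + 1)) k, hcrec m k]
    apply finsum_mem_congr rfl
    intro l hl
    rw [ihm l hl]
end
end

section
/- Let Cay(G,S) be a Cayley graph satisfying condition (S2). Then for every m ≥ 2, all i_1, …, i_m, k ∈ I(G), and every permutation σ of {1, …, m}, one has tilde p_{i_{σ(1)},…,i_{σ(m)}}^k = tilde p_{i_1,…,i_m}^k; equivalently, the number of m-tuples (v_1, …, v_m) ∈ S_{i_{σ(1)}}(e) × ⋯ × S_{i_{σ(m)}}(e) with d(e, v_1 ⋯ v_m) = k equals the number of m-tuples (v_1, …, v_m) ∈ S_{i_1}(e) × ⋯ × S_{i_m}(e) with d(e, v_1 ⋯ v_m) = k. -/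
open scoped BigOperators

noncomputable section

/-!
Write `Σ_a f (v) = ∑_{x ∈ S_a(e)} f (v x)`. By left invariance of the Cayley graph,
`tilde p_{i_1,…,i_m}^k` is `Σ_{i_1} ⋯ Σ_{i_m}` applied to the indicator of `S_k(e)`, divided by
`∏ |S_{i_j}(e)|`, and the tuple count is the same composite without normalisation. So it suffices
that the operators `Σ_a` commute. Now `Σ_a Σ_b f (v) = ∑_z |S_a(e) ∩ S_b(z)| f (v z)`, and
translating by `z⁻¹` gives `|S_a(e) ∩ S_b(z)| = |S_a(z⁻¹) ∩ S_b(e)|`, which by (S2) equals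
`|S_a(z) ∩ S_b(e)|` because `|z⁻¹| = |z|`; this is symmetric in `a` and `b`.
-/

open Finset Pointwise

theorem SimpleGraph.Hom.edist_map_le {V W : Type*} {A : SimpleGraph V} {B : SimpleGraph W}
    (φ : A →g B) (u v : V) : B.edist (φ u) (φ v) ≤ A.edist u v :=
  le_iInf fun p => (iInf_le _ (p.map φ)).trans_eq (by rw [SimpleGraph.Walk.length_map])

theorem SimpleGraph.Iso.dist_map {V W : Type*} {A : SimpleGraph V} {B : SimpleGraph W}
    (φ : A ≃g B) (u v : V) : B.dist (φ u) (φ v) = A.dist u v := by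
  refine congrArg ENat.toNat (le_antisymm (φ.toHom.edist_map_le u v) ?_)
  simpa using φ.symm.toHom.edist_map_le (φ u) (φ v)

/-- Unnormalised one-step operator of the walks behind `walkCoeff`, with increments in `A`. -/
def stepSum {G M : Type*} [Mul G] [AddCommMonoid M] (A : Set G) (f : G → M) (v : G) : M :=
  ∑ᶠ x ∈ A, f (v * x)

section GroupSums

variable {G M : Type*} [Group G] [AddCommMonoid M]

theorem Finset.sum_sum_mul_eq_sum_card_smul [DecidableEq G] {A B t : Finset G}
    (ht : A * B ⊆ t) (f : G → M) :
    ∑ x ∈ A, ∑ y ∈ B, f (x * y) = ∑ z ∈ t, #{x ∈ A | x⁻¹ * z ∈ B} • f z := by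
  rw [← sum_product', ← sum_fiberwise_of_maps_to' (g := fun p : G × G => p.1 * p.2)
    fun p hp => ht (mul_mem_mul (mem_product.1 hp).1 (mem_product.1 hp).2)]
  refine sum_congr rfl fun z _ => ?_
  rw [sum_const]
  congr 1
  refine card_nbij' Prod.fst (fun x => (x, x⁻¹ * z)) ?_ (fun x hx => by simpa using hx) ?_
    (fun _ _ => rfl) <;>
  · rintro ⟨x, y⟩ hxy
    obtain ⟨⟨hx, hy⟩, rfl⟩ : (x ∈ A ∧ y ∈ B) ∧ x * y = z := by simpa using hxy
    simp [hx, hy]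

theorem Finset.sum_sum_mul_comm_of_card_eq [DecidableEq G] {A B : Finset G}
    (h : ∀ z, #{x ∈ A | x⁻¹ * z ∈ B} = #{y ∈ B | y⁻¹ * z ∈ A}) (f : G → M) :
    ∑ x ∈ A, ∑ y ∈ B, f (x * y) = ∑ y ∈ B, ∑ x ∈ A, f (y * x) := by
  rw [sum_sum_mul_eq_sum_card_smul (t := A * B ∪ B * A) subset_union_left,
    sum_sum_mul_eq_sum_card_smul (t := A * B ∪ B * A) subset_union_right]
  simp_rw [h]

theorem stepSum_comm {A B : Set G} (hA : A.Finite) (hB : B.Finite)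
    (h : ∀ z, {x ∈ A | x⁻¹ * z ∈ B}.ncard = {y ∈ B | y⁻¹ * z ∈ A}.ncard) (f : G → M) :
    stepSum A (stepSum B f) = stepSum B (stepSum A f) := by
  classical
  lift A to Finset G using hA
  lift B to Finset G using hB
  ext v
  simp only [stepSum, finsum_mem_coe_finset, mul_assoc]
  refine sum_sum_mul_comm_of_card_eq (fun z => ?_) (fun z => f (v * z))
  rw [← Set.ncard_coe_finset, ← Set.ncard_coe_finset, coe_filter, coe_filter]
  simpa only [mem_coe] using h z

theorem sum_piFinset_eq_foldr_stepSum {m : ℕ} (A : Fin m → Finset G) (f : G → M) (v : G) :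
    ∑ x ∈ Fintype.piFinset A, f (v * (List.ofFn x).prod)
      = (List.ofFn fun l => (A l : Set G)).foldr stepSum f v := by
  induction m generalizing v with
  | zero => simp
  | succ m ih =>
    have hpi : Fintype.piFinset A
        = (A 0 ×ˢ Fintype.piFinset (Fin.tail A)).map (Fin.consEquiv fun _ => G).toEmbedding := by
      simpa using filter_piFinset_eq_map_consEquiv A (fun _ => True)
    rw [hpi, sum_map, sum_product, List.ofFn_succ, List.foldr_cons, stepSum,
      finsum_mem_coe_finset]
    refine sum_congr rfl fun x _ => ?_
    simpa [Fin.consEquiv, Fin.tail, mul_assoc] using ih (Fin.tail A) (v * x)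

end GroupSums

/-- Condition (S2) with base point `v0`; the common values are the intersection numbers. -/
def HasIntersectionNumbersAt {V : Type*} (Γ : SimpleGraph V) (v0 : V) : Prop :=
  ∀ i ∈ idx Γ v0, ∀ j ∈ idx Γ v0, ∀ k ∈ idx Γ v0, ∀ v ∈ gsphere Γ v0 k, ∀ v' ∈ gsphere Γ v0 k,
    (gsphere Γ v i ∩ gsphere Γ v0 j).ncard = (gsphere Γ v' i ∩ gsphere Γ v0 j).ncard

section Cayley

variable {G : Type*} [Group G] {S : Set G}

def cayleyMulLeft (S : Set G) (g : G) : cayley S ≃g cayley S where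
  toEquiv := Equiv.mulLeft g
  map_rel_iff' := by simp [cayley, mul_assoc]

theorem cayley_dist_mul_left (g u v : G) :
    (cayley S).dist (g * u) (g * v) = (cayley S).dist u v :=
  (cayleyMulLeft S g).dist_map u v

theorem cayley_dist_one_inv_mul (u v : G) :
    (cayley S).dist 1 (u⁻¹ * v) = (cayley S).dist u v := by
  simpa using cayley_dist_mul_left (S := S) u⁻¹ u v

theorem gsphere_cayley_mul_left (g v : G) (n : ℕ) :
    gsphere (cayley S) (g * v) n = (g * ·) '' gsphere (cayley S) v n := by
  ext w
  rw [Set.image_mul_left, Set.mem_preimage, gsphere, gsphere, Set.mem_ofPred_eq,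
    Set.mem_ofPred_eq, ← cayley_dist_mul_left g v, mul_inv_cancel_left]

theorem gsphere_cayley_eq_image (v : G) (n : ℕ) :
    gsphere (cayley S) v n = (v * ·) '' gsphere (cayley S) 1 n := by
  simpa using gsphere_cayley_mul_left (S := S) v 1 n

theorem ncard_gsphere_cayley (v : G) (n : ℕ) :
    (gsphere (cayley S) v n).ncard = (gsphere (cayley S) 1 n).ncard := by
  rw [gsphere_cayley_eq_image, Set.ncard_image_of_injective _ (mul_right_injective v)]

theorem cayley_reachable_one (hgen : Subgroup.closure S = ⊤) (g : G) :
    (cayley S).Reachable 1 g := by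
  have reachable_mul : ∀ v s, s ∈ S → (cayley S).Reachable v (v * s) := by
    intro v s hs
    by_cases hs1 : s = 1
    · simp [hs1]
    · refine SimpleGraph.Adj.reachable ?_
      simpa [cayley, hs1] using Or.inl hs
  induction (hgen ▸ Subgroup.mem_top g : g ∈ Subgroup.closure S)
    using Subgroup.closure_induction_right with
  | one => rfl
  | mul_right x _ s hs ih => exact ih.trans (reachable_mul x s hs)
  | mul_inv_cancel x _ s hs ih =>
    exact ih.trans (by simpa using (reachable_mul (x * s⁻¹) s hs).symm)

theorem inv_mul_mem_pow_length {u w : G} (p : (cayley S).Walk u w) :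
    u⁻¹ * w ∈ (S ∪ S⁻¹) ^ p.length := by
  induction p with
  | nil => simp
  | @cons u x w hadj p ih =>
    rw [SimpleGraph.Walk.length_cons, pow_succ', show u⁻¹ * w = u⁻¹ * x * (x⁻¹ * w) by group]
    refine Set.mul_mem_mul ?_ ih
    simpa [cayley, mul_inv_rev] using hadj.2

theorem finite_gsphere_cayley (hfin : S.Finite) (hgen : Subgroup.closure S = ⊤) (n : ℕ) :
    (gsphere (cayley S) 1 n).Finite := by
  have hpow : ∀ n : ℕ, ((S ∪ S⁻¹) ^ n).Finite := by
    intro n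
    induction n with
    | zero => simp
    | succ n ih => rw [pow_succ]; exact ih.mul (hfin.union hfin.inv)
  refine (hpow n).subset fun w hw => ?_
  obtain ⟨p, hp⟩ := (cayley_reachable_one hgen w).exists_walk_length_eq_dist
  simpa [hp, hw.out] using inv_mul_mem_pow_length p

theorem gsphere_cayley_eq_empty {n : ℕ} (hn : n ∉ idx (cayley S) 1) (v : G) :
    gsphere (cayley S) v n = ∅ := by
  rw [gsphere_cayley_eq_image, Set.not_nonempty_iff_eq_empty.mp hn, Set.image_empty]

theorem setOf_mem_gsphere_inv_mul_mem (a b : ℕ) (z : G) :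
    {x ∈ gsphere (cayley S) 1 a | x⁻¹ * z ∈ gsphere (cayley S) 1 b}
      = gsphere (cayley S) 1 a ∩ gsphere (cayley S) z b := by
  ext x
  simp only [gsphere, Set.mem_ofPred_eq, Set.mem_inter_iff, cayley_dist_one_inv_mul,
    SimpleGraph.dist_comm (u := x)]

theorem ncard_gsphere_cayley_inter_mul_left (g u w : G) (a b : ℕ) :
    (gsphere (cayley S) (g * u) a ∩ gsphere (cayley S) (g * w) b).ncard
      = (gsphere (cayley S) u a ∩ gsphere (cayley S) w b).ncard := by
  rw [gsphere_cayley_mul_left, gsphere_cayley_mul_left, ← Set.image_inter (mul_right_injective g),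
    Set.ncard_image_of_injective _ (mul_right_injective g)]

theorem ncard_gsphere_cayley_inter_comm (hS2 : HasIntersectionNumbersAt (cayley S) 1)
    (a b : ℕ) (z : G) :
    (gsphere (cayley S) 1 a ∩ gsphere (cayley S) z b).ncard
      = (gsphere (cayley S) 1 b ∩ gsphere (cayley S) z a).ncard := by
  by_cases ha : a ∈ idx (cayley S) 1
  swap; · simp [gsphere_cayley_eq_empty ha]
  by_cases hb : b ∈ idx (cayley S) 1
  swap; · simp [gsphere_cayley_eq_empty hb]
  have hz : (cayley S).dist 1 z⁻¹ = (cayley S).dist 1 z := by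
    simpa [SimpleGraph.dist_comm] using cayley_dist_one_inv_mul (S := S) z 1
  calc (gsphere (cayley S) 1 a ∩ gsphere (cayley S) z b).ncard
      = (gsphere (cayley S) z⁻¹ a ∩ gsphere (cayley S) 1 b).ncard := by
        simpa using (ncard_gsphere_cayley_inter_mul_left z⁻¹ 1 z a b).symm
    _ = (gsphere (cayley S) z a ∩ gsphere (cayley S) 1 b).ncard :=
        hS2 a ha b hb _ ⟨z, rfl⟩ z⁻¹ hz z rfl
    _ = _ := by rw [Set.inter_comm]

theorem stepSum_gsphere_cayley_comm {M : Type*} [AddCommMonoid M]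
    (hsph : ∀ n, (gsphere (cayley S) 1 n).Finite) (hS2 : HasIntersectionNumbersAt (cayley S) 1)
    (a b : ℕ) (f : G → M) :
    stepSum (gsphere (cayley S) 1 a) (stepSum (gsphere (cayley S) 1 b) f)
      = stepSum (gsphere (cayley S) 1 b) (stepSum (gsphere (cayley S) 1 a) f) := by
  refine stepSum_comm (hsph a) (hsph b) (fun z => ?_) f
  rw [setOf_mem_gsphere_inv_mul_mem, setOf_mem_gsphere_inv_mul_mem,
    ncard_gsphere_cayley_inter_comm hS2]

def sphereWalkSum {M : Type*} [AddCommMonoid M] (S : Set G) (l : List ℕ) (f : G → M) : G → M :=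
  (l.map (gsphere (cayley S) 1)).foldr stepSum f

theorem sphereWalkSum_perm {M : Type*} [AddCommMonoid M]
    (hsph : ∀ n, (gsphere (cayley S) 1 n).Finite) (hS2 : HasIntersectionNumbersAt (cayley S) 1)
    {l₁ l₂ : List ℕ} (h : l₁.Perm l₂) (f : G → M) :
    sphereWalkSum S l₁ f = sphereWalkSum S l₂ f := by
  refine (h.map _).foldr_eq' ?_ f
  simp only [List.mem_map]
  rintro _ ⟨a, -, rfl⟩ _ ⟨b, -, rfl⟩ g
  exact stepSum_gsphere_cayley_comm hsph hS2 b a g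

theorem ncard_setOf_gsphere_cayley_tuple (hsph : ∀ n, (gsphere (cayley S) 1 n).Finite)
    {m : ℕ} (i : Fin m → ℕ) (P : G → Prop) [DecidablePred P] :
    {x : Fin m → G | (∀ l, x l ∈ gsphere (cayley S) 1 (i l)) ∧ P (List.ofFn x).prod}.ncard
      = sphereWalkSum S (List.ofFn i) (fun w => if P w then 1 else 0) 1 := by
  have hset : {x : Fin m → G | (∀ l, x l ∈ gsphere (cayley S) 1 (i l)) ∧ P (List.ofFn x).prod}
      = {x ∈ Fintype.piFinset fun l => (hsph (i l)).toFinset | P (1 * (List.ofFn x).prod)} := by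
    ext x
    simp
  rw [hset, Set.ncard_coe_finset, card_filter,
    sum_piFinset_eq_foldr_stepSum _ (fun w => if P w then 1 else 0), sphereWalkSum,
    List.map_ofFn]
  simp [Function.comp_def]

theorem walkCoeff_cayley_cons (v0 v : G) (a : ℕ) (l : List ℕ) (k : ℕ) :
    walkCoeff (cayley S) v0 v (a :: l) k
      = ((gsphere (cayley S) 1 a).ncard : ℚ)⁻¹
          * stepSum (gsphere (cayley S) 1 a) (fun w => walkCoeff (cayley S) v0 w l k) v := by
  rw [walkCoeff, ncard_gsphere_cayley, gsphere_cayley_eq_image,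
    finsum_mem_image (mul_right_injective v).injOn, stepSum, mul_finsum_mem]
  simp only [div_eq_inv_mul]

theorem walkCoeff_cayley_eq (v0 v : G) (l : List ℕ) (k : ℕ) :
    walkCoeff (cayley S) v0 v l k
      = (l.map fun a => ((gsphere (cayley S) 1 a).ncard : ℚ)).prod⁻¹
          * sphereWalkSum S l (fun w => if (cayley S).dist v0 w = k then 1 else 0) v := by
  induction l generalizing v with
  | nil => simp [walkCoeff, sphereWalkSum]
  | cons a l ih =>
    simp only [walkCoeff_cayley_cons, ih, stepSum, ← mul_finsum_mem, List.map_cons,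
      List.prod_cons, mul_inv, mul_assoc]
    rfl

end Cayley

theorem cayley_S2_walkCoeff_perm_invariant_general {G : Type*} [Group G] (S : Set G)
    (hfin : S.Finite)
    (hgen : Subgroup.closure S = ⊤)
    (hS2 : ∀ i ∈ idx (cayley S) (1 : G), ∀ j ∈ idx (cayley S) (1 : G),
      ∀ k ∈ idx (cayley S) (1 : G),
      ∀ v ∈ gsphere (cayley S) (1 : G) k, ∀ v' ∈ gsphere (cayley S) (1 : G) k,
        (gsphere (cayley S) v i ∩ gsphere (cayley S) (1 : G) j).ncard
          = (gsphere (cayley S) v' i ∩ gsphere (cayley S) (1 : G) j).ncard)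
    (m : ℕ) (i : Fin m → ℕ)
    (k : ℕ) (σ : Equiv.Perm (Fin m)) :
    walkCoeff (cayley S) (1 : G) (1 : G) (List.ofFn (fun l => i (σ l))) k
      = walkCoeff (cayley S) (1 : G) (1 : G) (List.ofFn i) k ∧
    Set.ncard {v : Fin m → G | (∀ l : Fin m, v l ∈ gsphere (cayley S) (1 : G) (i (σ l))) ∧
        (cayley S).dist 1 (List.ofFn v).prod = k}
      = Set.ncard {v : Fin m → G | (∀ l : Fin m, v l ∈ gsphere (cayley S) (1 : G) (i l)) ∧
          (cayley S).dist 1 (List.ofFn v).prod = k} := by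
  have hsph := finite_gsphere_cayley hfin hgen
  have hperm : (List.ofFn fun l => i (σ l)).Perm (List.ofFn i) := σ.ofFn_comp_perm i
  constructor
  · rw [walkCoeff_cayley_eq, walkCoeff_cayley_eq, (hperm.map _).prod_eq,
      sphereWalkSum_perm hsph hS2 hperm]
  · rw [ncard_setOf_gsphere_cayley_tuple hsph _ ((cayley S).dist 1 · = k),
      ncard_setOf_gsphere_cayley_tuple hsph _ ((cayley S).dist 1 · = k),
      sphereWalkSum_perm hsph hS2 hperm]

/-- for a Cayley graph satisfying (S2), `tilde p_{i_{σ(1)},…,i_{σ(m)}}^k =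
tilde p_{i₁,…,i_m}^k` for every permutation `σ`; equivalently the corresponding tuple
counts coincide. -/
theorem cayley_S2_walkCoeff_perm_invariant {G : Type*} [Group G] (S : Set G)
    (hfin : S.Finite) (hsym : ∀ s ∈ S, s⁻¹ ∈ S) (hid : (1 : G) ∉ S)
    (hgen : Subgroup.closure S = ⊤)
    (hS2 : ∀ i ∈ idx (cayley S) (1 : G), ∀ j ∈ idx (cayley S) (1 : G),
      ∀ k ∈ idx (cayley S) (1 : G),
      ∀ v ∈ gsphere (cayley S) (1 : G) k, ∀ v' ∈ gsphere (cayley S) (1 : G) k,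
        (gsphere (cayley S) v i ∩ gsphere (cayley S) (1 : G) j).ncard
          = (gsphere (cayley S) v' i ∩ gsphere (cayley S) (1 : G) j).ncard)
    (m : ℕ) (hm : 2 ≤ m) (i : Fin m → ℕ) (hi : ∀ l, i l ∈ idx (cayley S) (1 : G))
    (k : ℕ) (hk : k ∈ idx (cayley S) (1 : G)) (σ : Equiv.Perm (Fin m)) :
    walkCoeff (cayley S) (1 : G) (1 : G) (List.ofFn (fun l => i (σ l))) k
      = walkCoeff (cayley S) (1 : G) (1 : G) (List.ofFn i) k ∧
    Set.ncard {v : Fin m → G | (∀ l : Fin m, v l ∈ gsphere (cayley S) (1 : G) (i (σ l))) ∧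
        (cayley S).dist 1 (List.ofFn v).prod = k}
      = Set.ncard {v : Fin m → G | (∀ l : Fin m, v l ∈ gsphere (cayley S) (1 : G) (i l)) ∧
          (cayley S).dist 1 (List.ofFn v).prod = k} :=
  cayley_S2_walkCoeff_perm_invariant_general S hfin hgen hS2 m i k σ
end
end

section
/- Let Cay(G,S) be a Cayley graph and let (α_n)_{n ∈ ℕ₀} be nonnegative real numbers. Then for all i, j ∈ I(G), (1/|S_i(e)|) · Σ_{v ∈ S_i(e)} Σ_{w ∈ G, vw ∈ S_j(e)} α_{|w|} = Σ_{k ∈ I(G)} p_{i,k}^j · α_k · |S_k(e)|, where all sums are finitely supported. (When (α_n) is a distribution on G, i.e. Σ_{n ∈ I(G)} α_n |S_n(e)| = 1 with α_n > 0, this says ℙ(Z_2 = j | Z_1 = i) = Σ_k p_{i,k}^j α_k |S_k(e)| for the random walk whose steps are i.i.d. with law ℙ(X = v) = α_{|v|} and Z_n = |X_1 ⋯ X_n|.) -/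
/-!
Left translations are automorphisms of the Cayley graph, so translating by `v⁻¹` turns the
inner sum over `{w | v w ∈ S_j(e)}` into `∑_{u ∈ S_j(e)} α (d(v, u))`; the left side is
therefore `|S_i(e)|⁻¹ ∑ α (d(v, u))` over the pairs `(v, u) ∈ S_i(e) × S_j(e)`. Grouping these
pairs by `k = d(v, u)` gives `∑_k α_k · #{(v, u) | d(v, u) = k} / |S_i(e)|`. Since every sphere
of radius `k` has `|S_k(e)|` elements, `p_{i,k}^j |S_k(e)|` is exactly this pair count divided
by `|S_i(e)|`. All spheres are finite because the graph is connected and locally finite.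
-/

open scoped BigOperators

noncomputable section

namespace SimpleGraph

section General

variable {V V' : Type*} {G : SimpleGraph V} {G' : SimpleGraph V'}

theorem Hom.edist_le (f : G →g G') (u v : V) : G'.edist (f u) (f v) ≤ G.edist u v := by
  by_cases hr : G.Reachable u v
  · obtain ⟨p, hp⟩ := hr.exists_walk_length_eq_edist
    rw [← hp, ← Walk.length_map f]
    exact SimpleGraph.edist_le _
  · rw [edist_eq_top_of_not_reachable hr]
    exact le_top

theorem Iso.dist_eq (f : G ≃g G') (u v : V) : G'.dist (f u) (f v) = G.dist u v := by
  have h := f.symm.toHom.edist_le (f u) (f v)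
  simp only [RelIso.coe_toRelEmbedding, Embedding.coe_toHom, RelIso.symm_apply_apply] at h
  exact congrArg ENat.toNat (le_antisymm (f.toHom.edist_le u v) h)

theorem Connected.exists_adj_dist_eq_of_dist_eq_succ (hG : G.Connected) {v w : V} {n : ℕ}
    (h : G.dist v w = n + 1) : ∃ u, G.Adj u w ∧ G.dist v u = n := by
  obtain ⟨p, hp⟩ := hG.exists_walk_length_eq_dist w v
  rw [dist_comm, h] at hp
  cases p with
  | nil => simp at hp
  | @cons _ u _ hadj q =>
    refine ⟨u, hadj.symm, le_antisymm ?_ ?_⟩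
    · rw [dist_comm]
      have := dist_le q
      simp only [Walk.length_cons] at hp
      omega
    · have htri : G.dist v w ≤ G.dist v u + G.dist u w := hG.dist_triangle
      rw [h, dist_eq_one_iff_adj.mpr hadj.symm] at htri
      omega

theorem Connected.finite_gsphere (hG : G.Connected) (hfin : ∀ v, (G.neighborSet v).Finite)
    (v : V) (n : ℕ) : (gsphere G v n).Finite := by
  induction n with
  | zero =>
    refine (Set.finite_singleton v).subset fun w hw => ?_
    exact (hG.dist_eq_zero_iff.mp hw).symm
  | succ n ih =>
    refine (ih.biUnion fun u _ => hfin u).subset fun w hw => ?_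
    obtain ⟨u, hadj, hu⟩ := hG.exists_adj_dist_eq_of_dist_eq_succ hw
    exact Set.mem_biUnion hu hadj

end General

section Cayley

variable {M : Type*} [Group M] {s : Set M}

def mulCayleyMulLeft (a : M) : mulCayley s ≃g mulCayley s where
  toEquiv := Equiv.mulLeft a
  map_rel_iff' := mulCayley_adj_mul_iff_right

theorem mulCayley_dist_mul_left (a u v : M) :
    (mulCayley s).dist (a * u) (a * v) = (mulCayley s).dist u v :=
  (mulCayleyMulLeft a).dist_eq u v

theorem mulCayley_dist_one_inv_mul (u v : M) :
    (mulCayley s).dist 1 (u⁻¹ * v) = (mulCayley s).dist u v := by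
  rw [← mulCayley_dist_mul_left u, mul_one, mul_inv_cancel_left]

theorem gsphere_mulCayley (v : M) (n : ℕ) :
    gsphere (mulCayley s) v n = (v * ·) '' gsphere (mulCayley s) 1 n := by
  ext w
  rw [Set.image_mul_left]
  simp only [gsphere, Set.mem_preimage, Set.mem_ofPred_eq, mulCayley_dist_one_inv_mul]

theorem ncard_gsphere_mulCayley (v : M) (n : ℕ) :
    (gsphere (mulCayley s) v n).ncard = (gsphere (mulCayley s) 1 n).ncard := by
  rw [gsphere_mulCayley, Set.ncard_image_of_injective _ (mul_right_injective v)]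

theorem mulCayley_reachable_mul {x y : M} (hy : y ∈ s) : (mulCayley s).Reachable x (x * y) := by
  by_cases h : x = x * y
  · rw [← h]
  · exact Adj.reachable ((mulCayley_adj' s _ _).mpr ⟨h, y, hy, Or.inl rfl⟩)

theorem mulCayley_reachable_one (hs : Subgroup.closure s = ⊤) (g : M) :
    (mulCayley s).Reachable 1 g := by
  refine Subgroup.closure_induction_right (p := fun g _ => (mulCayley s).Reachable 1 g) .rfl
    (fun x _ y hy ih => ih.trans (mulCayley_reachable_mul hy))
    (fun x _ y hy ih => ih.trans ?_) (hs ▸ Subgroup.mem_top g)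
  simpa using (mulCayley_reachable_mul (x := x * y⁻¹) hy).symm

theorem mulCayley_connected (hs : Subgroup.closure s = ⊤) : (mulCayley s).Connected :=
  have : Nonempty M := ⟨1⟩
  ⟨fun u v => (mulCayley_reachable_one hs u).symm.trans (mulCayley_reachable_one hs v)⟩

theorem mulCayley_neighborSet_finite (hs : s.Finite) (v : M) :
    ((mulCayley s).neighborSet v).Finite := by
  refine ((hs.union hs.inv).image (v * ·)).subset fun w hw => ?_
  rw [mem_neighborSet, mulCayley_adj] at hw
  refine ⟨v⁻¹ * w, ?_, mul_inv_cancel_left v w⟩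
  rcases hw.2 with h | h
  · exact Or.inl h
  · exact Or.inr (by simpa using h)

theorem mulCayley_finite_gsphere (hs : s.Finite) (hgen : Subgroup.closure s = ⊤) (v : M)
    (n : ℕ) : (gsphere (mulCayley s) v n).Finite :=
  (mulCayley_connected hgen).finite_gsphere (mulCayley_neighborSet_finite hs) v n

theorem finsum_mem_preimage_mul_left_mulCayley_dist {β : Type*} [AddCommMonoid β] (f : ℕ → β)
    (v : M) (A : Set M) :
    ∑ᶠ w ∈ {w | v * w ∈ A}, f ((mulCayley s).dist 1 w) =
      ∑ᶠ u ∈ A, f ((mulCayley s).dist v u) := by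
  have hpre : {w | v * w ∈ A} = (v⁻¹ * ·) '' A := by
    rw [Set.image_mul_left, inv_inv]
    rfl
  rw [hpre, finsum_mem_image (mul_right_injective _).injOn]
  simp only [mulCayley_dist_one_inv_mul]

end Cayley

end SimpleGraph

theorem cayley_eq_mulCayley {G : Type*} [Group G] (S : Set G) :
    cayley S = SimpleGraph.mulCayley S := by
  ext v w
  simp [cayley, SimpleGraph.mulCayley_adj]

open Finset SimpleGraph

theorem ncard_inter_gsphere_eq_card_filter {V : Type*} [DecidableEq V] {Γ : SimpleGraph V}
    {v0 : V} {j : ℕ} (hj : (gsphere Γ v0 j).Finite) (v : V) (k : ℕ) :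
    (gsphere Γ v k ∩ gsphere Γ v0 j).ncard = #{u ∈ hj.toFinset | Γ.dist v u = k} := by
  rw [← Set.ncard_coe_finset]
  congr 1
  ext u
  simp [gsphere, and_comm]

theorem structConst_mul_ncard_gsphere {V : Type*} [DecidableEq V] {Γ : SimpleGraph V} {v0 : V}
    {i j k : ℕ} (hi : (gsphere Γ v0 i).Finite) (hj : (gsphere Γ v0 j).Finite)
    (hk : ∀ v, (gsphere Γ v k).Finite)
    (hreg : ∀ v, (gsphere Γ v k).ncard = (gsphere Γ v0 k).ncard) :
    structConst Γ v0 i k j * (gsphere Γ v0 k).ncard =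
      #{x ∈ hi.toFinset ×ˢ hj.toFinset | Γ.dist x.1 x.2 = k} / (gsphere Γ v0 i).ncard := by
  have hcancel : ∀ v, ((gsphere Γ v k ∩ gsphere Γ v0 j).ncard : ℚ) / (gsphere Γ v k).ncard
      * (gsphere Γ v0 k).ncard = (gsphere Γ v k ∩ gsphere Γ v0 j).ncard := by
    intro v
    rw [← hreg v]
    -- the junk case `0 / 0` is harmless: an empty sphere has empty intersections
    refine div_mul_cancel_of_imp fun h => ?_
    have hle := Set.ncard_inter_le_ncard_left _ (gsphere Γ v0 j) (hk v)
    rw [Nat.cast_eq_zero.mp h, Nat.le_zero] at hle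
    rw [hle, Nat.cast_zero]
  have hpairs : #{x ∈ hi.toFinset ×ˢ hj.toFinset | Γ.dist x.1 x.2 = k}
      = ∑ v ∈ hi.toFinset, (gsphere Γ v k ∩ gsphere Γ v0 j).ncard := by
    simp only [card_filter, sum_product, ncard_inter_gsphere_eq_card_filter hj]
  rw [structConst, finsum_mem_eq_finite_toFinset_sum _ hi, mul_assoc, sum_mul,
    sum_congr rfl fun v _ => hcancel v, hpairs, Nat.cast_sum, one_div_mul_eq_div]

theorem finsum_card_filter_nsmul_eq_sum {ι κ β : Type*} [DecidableEq κ] [AddCommMonoid β]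
    (s : Finset ι) (f : ι → κ) (g : κ → β) :
    ∑ᶠ k, #{x ∈ s | f x = k} • g k = ∑ x ∈ s, g (f x) := by
  rw [← finsum_sum_filter f]
  refine finsum_congr fun k => ?_
  rw [← sum_const]
  exact sum_congr rfl fun x hx => by rw [(mem_filter.mp hx).2]

theorem finsum_mem_eq_finsum_of_support_subset {α M : Type*} [AddCommMonoid M] {f : α → M}
    {s : Set α} (h : Function.support f ⊆ s) : ∑ᶠ i ∈ s, f i = ∑ᶠ i, f i := by
  rw [← finsum_mem_inter_support, Set.inter_eq_right.mpr h, finsum_mem_support]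

theorem cayley_two_step_transition_general {G : Type*} [Group G] (S : Set G)
    (hfin : S.Finite) (hgen : Subgroup.closure S = ⊤)
    (α : ℕ → ℝ) (i j : ℕ) :
    (1 / ((gsphere (cayley S) (1 : G) i).ncard : ℝ)) *
        ∑ᶠ v ∈ gsphere (cayley S) (1 : G) i,
          ∑ᶠ w ∈ {w : G | v * w ∈ gsphere (cayley S) (1 : G) j}, α ((cayley S).dist 1 w)
      = ∑ᶠ k ∈ idx (cayley S) (1 : G),
          (structConst (cayley S) (1 : G) i k j : ℝ) * α k
            * ((gsphere (cayley S) (1 : G) k).ncard : ℝ) := by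
  classical
  rw [cayley_eq_mulCayley]
  simp only [finsum_mem_preimage_mul_left_mulCayley_dist]
  have hsph := mulCayley_finite_gsphere hfin hgen
  set Γ := mulCayley S
  set P := (hsph 1 i).toFinset ×ˢ (hsph 1 j).toFinset
  have hterm (k : ℕ) : (structConst Γ 1 i k j : ℝ) * α k * (gsphere Γ 1 k).ncard
      = 1 / (gsphere Γ 1 i).ncard * (#{x ∈ P | Γ.dist x.1 x.2 = k} • α k) := by
    have h := congrArg (Rat.cast : ℚ → ℝ) (structConst_mul_ncard_gsphere (hsph 1 i) (hsph 1 j)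
      (hsph · k) (ncard_gsphere_mulCayley · k))
    push_cast at h
    rw [mul_right_comm, h, nsmul_eq_mul]
    ring
  have hsupp : Function.support (fun k => (structConst Γ 1 i k j : ℝ) * α k
      * (gsphere Γ 1 k).ncard) ⊆ idx Γ 1 := fun k hk =>
    Set.nonempty_of_ncard_ne_zero fun h => hk (by simp [h])
  rw [finsum_mem_eq_finsum_of_support_subset hsupp, finsum_congr hterm, ← mul_finsum,
    finsum_card_filter_nsmul_eq_sum, sum_product, finsum_mem_eq_finite_toFinset_sum _ (hsph 1 i)]
  simp only [finsum_mem_eq_finite_toFinset_sum _ (hsph 1 j)]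

/-- for a Cayley graph and nonnegative reals `(α_n)`,
`(1/|S_i(e)|) Σ_{v ∈ S_i(e)} Σ_{w : vw ∈ S_j(e)} α_{|w|} = Σ_{k ∈ I(G)} p_{i,k}^j α_k |S_k(e)|`. -/
theorem cayley_two_step_transition {G : Type*} [Group G] (S : Set G)
    (hfin : S.Finite) (hsym : ∀ s ∈ S, s⁻¹ ∈ S) (hid : (1 : G) ∉ S)
    (hgen : Subgroup.closure S = ⊤)
    (α : ℕ → ℝ) (hα : ∀ n, 0 ≤ α n)
    (i j : ℕ) (hi : i ∈ idx (cayley S) (1 : G)) (hj : j ∈ idx (cayley S) (1 : G)) :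
    (1 / ((gsphere (cayley S) (1 : G) i).ncard : ℝ)) *
        ∑ᶠ v ∈ gsphere (cayley S) (1 : G) i,
          ∑ᶠ w ∈ {w : G | v * w ∈ gsphere (cayley S) (1 : G) j}, α ((cayley S).dist 1 w)
      = ∑ᶠ k ∈ idx (cayley S) (1 : G),
          (structConst (cayley S) (1 : G) i k j : ℝ) * α k
            * ((gsphere (cayley S) (1 : G) k).ncard : ℝ) :=
  cayley_two_step_transition_general S hfin hgen α i j
end
end

section
/- Let (Γ, v_0) be a pointed infinite graph as in the standing assumptions, and suppose S(Γ) := sup_{v ∈ V} sup_{k ∈ I(Γ)} |S_k(v)| < ∞. Then for every k ∈ I(Γ), the operator P_k on ℓ²(I(Γ)) given by (P_k ξ)_n = Σ_{l ∈ I(Γ)} p_{k,l}^n ξ_l is bounded with ‖P_k‖ ≤ S(Γ)². In particular |Supp^j(k)| ≤ S(Γ)² and |Supp_i(k)| ≤ S(Γ)² for all i, j ∈ I(Γ), where Supp_i(k) = {j : p_{k,i}^j ≠ 0} and Supp^j(k) = {i : p_{k,i}^j ≠ 0}. -/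
open scoped BigOperators ENNReal NNReal

noncomputable section

/-- `S(Γ) = sup_{v ∈ V} sup_{k ∈ I(Γ)} |S_k(v)|`, as an extended natural number. -/
noncomputable def sphereBound {V : Type*} (Γ : SimpleGraph V) (v0 : V) : ℕ∞ :=
  ⨆ v : V, ⨆ k ∈ idx Γ v0, ((gsphere Γ v k).ncard : ℕ∞)

section Aux

variable {V : Type*} {Γ : SimpleGraph V} {v0 : V}

lemma sphere_card_le (hS : sphereBound Γ v0 < ⊤) (v : V) {m : ℕ} (hm : m ∈ idx Γ v0) :
    (gsphere Γ v m).ncard ≤ (sphereBound Γ v0).toNat := by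
  have h1 : ((gsphere Γ v m).ncard : ℕ∞) ≤ sphereBound Γ v0 := by
    refine le_trans ?_ (le_iSup (fun v => ⨆ k ∈ idx Γ v0, ((gsphere Γ v k).ncard : ℕ∞)) v)
    exact le_iSup₂ (f := fun k (_ : k ∈ idx Γ v0) => ((gsphere Γ v k).ncard : ℕ∞)) m hm
  have := ENat.toNat_le_toNat h1 hS.ne
  simpa using this

lemma structConst_finsum_eq (hfin : ∀ (v : V) (n : ℕ), (gsphere Γ v n).Finite) (a i j : ℕ) :
    structConst Γ v0 a i j =
      (1 / ((gsphere Γ v0 a).ncard : ℚ)) *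
        ∑ v ∈ (hfin v0 a).toFinset,
          ((gsphere Γ v i ∩ gsphere Γ v0 j).ncard : ℚ) / ((gsphere Γ v i).ncard : ℚ) := by
  rw [structConst, ← finsum_mem_coe_finset, Set.Finite.coe_toFinset]

lemma structConst_witness (hfin : ∀ (v : V) (n : ℕ), (gsphere Γ v n).Finite) {a i j : ℕ}
    (h : structConst Γ v0 a i j ≠ 0) :
    ∃ v w : V, Γ.dist v0 v = a ∧ Γ.dist v w = i ∧ Γ.dist v0 w = j := by
  rw [structConst_finsum_eq hfin] at h
  have hsum : ∑ v ∈ (hfin v0 a).toFinset,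
      ((gsphere Γ v i ∩ gsphere Γ v0 j).ncard : ℚ) / ((gsphere Γ v i).ncard : ℚ) ≠ 0 := by
    intro h0; exact h (by rw [h0, mul_zero])
  obtain ⟨v, hv, hterm⟩ := Finset.exists_ne_zero_of_sum_ne_zero hsum
  have hv' : v ∈ gsphere Γ v0 a := (Set.Finite.mem_toFinset _).mp hv
  have hnum : ((gsphere Γ v i ∩ gsphere Γ v0 j).ncard : ℚ) ≠ 0 := by
    intro h0; exact hterm (by rw [h0, zero_div])
  have hne : (gsphere Γ v i ∩ gsphere Γ v0 j).Nonempty :=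
    Set.nonempty_of_ncard_ne_zero (by exact_mod_cast hnum)
  obtain ⟨w, hw1, hw2⟩ := hne
  exact ⟨v, w, hv', hw1, hw2⟩

lemma structConst_nonneg (hfin : ∀ (v : V) (n : ℕ), (gsphere Γ v n).Finite) (a i j : ℕ) :
    0 ≤ structConst Γ v0 a i j := by
  rw [structConst_finsum_eq hfin]
  apply mul_nonneg
  · positivity
  · exact Finset.sum_nonneg fun v _ => by positivity

lemma structConst_le_one (hfin : ∀ (v : V) (n : ℕ), (gsphere Γ v n).Finite)
    {a : ℕ} (ha : a ∈ idx Γ v0) (i j : ℕ) : structConst Γ v0 a i j ≤ 1 := by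
  rw [structConst_finsum_eq hfin]
  have hcard : ((gsphere Γ v0 a).ncard : ℚ) = ((hfin v0 a).toFinset.card : ℚ) := by
    rw [Set.ncard_eq_toFinset_card _ (hfin v0 a)]
  have hpos : (0 : ℚ) < ((gsphere Γ v0 a).ncard : ℚ) := by
    have := (Set.ncard_pos (hfin v0 a)).mpr ha
    exact_mod_cast this
  have hterm : ∀ v ∈ (hfin v0 a).toFinset,
      ((gsphere Γ v i ∩ gsphere Γ v0 j).ncard : ℚ) / ((gsphere Γ v i).ncard : ℚ) ≤ 1 := by
    intro v _
    rcases Nat.eq_zero_or_pos (gsphere Γ v i).ncard with h0 | hp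
    · simp [h0]
    · rw [div_le_one (by exact_mod_cast hp)]
      exact_mod_cast Set.ncard_le_ncard Set.inter_subset_left (hfin v i)
  calc (1 / ((gsphere Γ v0 a).ncard : ℚ)) * ∑ v ∈ (hfin v0 a).toFinset,
        ((gsphere Γ v i ∩ gsphere Γ v0 j).ncard : ℚ) / ((gsphere Γ v i).ncard : ℚ)
      ≤ (1 / ((gsphere Γ v0 a).ncard : ℚ)) * ((hfin v0 a).toFinset.card : ℚ) := by
        apply mul_le_mul_of_nonneg_left _ (by positivity)
        calc ∑ v ∈ (hfin v0 a).toFinset, ((gsphere Γ v i ∩ gsphere Γ v0 j).ncard : ℚ) / ((gsphere Γ v i).ncard : ℚ)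
            ≤ ∑ _v ∈ (hfin v0 a).toFinset, (1:ℚ) := Finset.sum_le_sum hterm
          _ = ((hfin v0 a).toFinset.card : ℚ) := by simp
    _ = 1 := by rw [← hcard]; field_simp

lemma supp_upper (hfin : ∀ (v : V) (n : ℕ), (gsphere Γ v n).Finite)
    (hS : sphereBound Γ v0 < ⊤) {a j : ℕ} (ha : a ∈ idx Γ v0) (hj : j ∈ idx Γ v0) :
    {i | i ∈ idx Γ v0 ∧ structConst Γ v0 a i j ≠ 0}.ncard ≤ (sphereBound Γ v0).toNat ^ 2 := by
  classical
  set F : Finset (V × V) := (hfin v0 a).toFinset ×ˢ (hfin v0 j).toFinset with hF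
  have hsub : {i | i ∈ idx Γ v0 ∧ structConst Γ v0 a i j ≠ 0} ⊆
      ↑(F.image fun p => Γ.dist p.1 p.2) := by
    rintro i ⟨_, hne0⟩
    obtain ⟨v, w, h1, h2, h3⟩ := structConst_witness hfin hne0
    refine Finset.mem_coe.mpr (Finset.mem_image.mpr ⟨(v, w), ?_, h2⟩)
    rw [hF, Finset.mem_product]
    exact ⟨(Set.Finite.mem_toFinset _).mpr h1, (Set.Finite.mem_toFinset _).mpr h3⟩
  calc {i | i ∈ idx Γ v0 ∧ structConst Γ v0 a i j ≠ 0}.ncard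
      ≤ (↑(F.image fun p => Γ.dist p.1 p.2) : Set ℕ).ncard :=
        Set.ncard_le_ncard hsub (Finset.finite_toSet _)
    _ = (F.image fun p => Γ.dist p.1 p.2).card := Set.ncard_coe_finset _
    _ ≤ F.card := Finset.card_image_le
    _ = (hfin v0 a).toFinset.card * (hfin v0 j).toFinset.card := Finset.card_product _ _
    _ ≤ (sphereBound Γ v0).toNat * (sphereBound Γ v0).toNat := by
        apply Nat.mul_le_mul
        · rw [← Set.ncard_eq_toFinset_card _ (hfin v0 a)]; exact sphere_card_le hS v0 ha
        · rw [← Set.ncard_eq_toFinset_card _ (hfin v0 j)]; exact sphere_card_le hS v0 hj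
    _ = (sphereBound Γ v0).toNat ^ 2 := (sq _).symm

lemma supp_lower (hfin : ∀ (v : V) (n : ℕ), (gsphere Γ v n).Finite)
    (hS : sphereBound Γ v0 < ⊤) {a i : ℕ} (ha : a ∈ idx Γ v0) (hi : i ∈ idx Γ v0) :
    {j | j ∈ idx Γ v0 ∧ structConst Γ v0 a i j ≠ 0}.ncard ≤ (sphereBound Γ v0).toNat ^ 2 := by
  classical
  set F : Finset V := (hfin v0 a).toFinset.biUnion (fun v => (hfin v i).toFinset) with hF
  have hsub : {j | j ∈ idx Γ v0 ∧ structConst Γ v0 a i j ≠ 0} ⊆ ↑(F.image (Γ.dist v0)) := by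
    rintro j ⟨_, hne0⟩
    obtain ⟨v, w, h1, h2, h3⟩ := structConst_witness hfin hne0
    refine Finset.mem_coe.mpr (Finset.mem_image.mpr ⟨w, ?_, h3⟩)
    rw [hF, Finset.mem_biUnion]
    exact ⟨v, (Set.Finite.mem_toFinset _).mpr h1, (Set.Finite.mem_toFinset _).mpr h2⟩
  calc {j | j ∈ idx Γ v0 ∧ structConst Γ v0 a i j ≠ 0}.ncard
      ≤ (↑(F.image (Γ.dist v0)) : Set ℕ).ncard := Set.ncard_le_ncard hsub (Finset.finite_toSet _)
    _ = (F.image (Γ.dist v0)).card := Set.ncard_coe_finset _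
    _ ≤ F.card := Finset.card_image_le
    _ ≤ ∑ v ∈ (hfin v0 a).toFinset, (hfin v i).toFinset.card := Finset.card_biUnion_le
    _ ≤ ∑ _v ∈ (hfin v0 a).toFinset, (sphereBound Γ v0).toNat := by
        refine Finset.sum_le_sum fun v _ => ?_
        rw [← Set.ncard_eq_toFinset_card _ (hfin v i)]; exact sphere_card_le hS v hi
    _ = (hfin v0 a).toFinset.card * (sphereBound Γ v0).toNat := by
        rw [Finset.sum_const, smul_eq_mul]
    _ ≤ (sphereBound Γ v0).toNat * (sphereBound Γ v0).toNat := by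
        apply Nat.mul_le_mul_right
        rw [← Set.ncard_eq_toFinset_card _ (hfin v0 a)]; exact sphere_card_le hS v0 ha
    _ = (sphereBound Γ v0).toNat ^ 2 := (sq _).symm

lemma supp_upper_finite (hfin : ∀ (v : V) (n : ℕ), (gsphere Γ v n).Finite) (a j : ℕ) :
    {i : ℕ | structConst Γ v0 a i j ≠ 0}.Finite := by
  classical
  apply Set.Finite.subset
    ((((hfin v0 a).toFinset ×ˢ (hfin v0 j).toFinset).image fun p => Γ.dist p.1 p.2).finite_toSet)
  intro i hi
  obtain ⟨v, w, h1, h2, h3⟩ := structConst_witness hfin hi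
  exact Finset.mem_coe.mpr (Finset.mem_image.mpr ⟨(v, w), Finset.mem_product.mpr
    ⟨(Set.Finite.mem_toFinset _).mpr h1, (Set.Finite.mem_toFinset _).mpr h3⟩, h2⟩)

lemma supp_lower_finite (hfin : ∀ (v : V) (n : ℕ), (gsphere Γ v n).Finite) (a i : ℕ) :
    {j : ℕ | structConst Γ v0 a i j ≠ 0}.Finite := by
  classical
  apply Set.Finite.subset
    ((((hfin v0 a).toFinset.biUnion fun v => (hfin v i).toFinset).image (Γ.dist v0)).finite_toSet)
  intro j hj
  obtain ⟨v, w, h1, h2, h3⟩ := structConst_witness hfin hj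
  refine Finset.mem_coe.mpr (Finset.mem_image.mpr ⟨w, Finset.mem_biUnion.mpr
    ⟨v, (Set.Finite.mem_toFinset _).mpr h1, (Set.Finite.mem_toFinset _).mpr h2⟩, h3⟩)

lemma exists_bounded_op (hfin : ∀ (v : V) (n : ℕ), (gsphere Γ v n).Finite)
    (hS : sphereBound Γ v0 < ⊤) (k : ℕ) (hk : k ∈ idx Γ v0) :
    ∃ T : lp (fun _ : {n : ℕ // n ∈ idx Γ v0} => ℂ) 2
        →L[ℂ] lp (fun _ : {n : ℕ // n ∈ idx Γ v0} => ℂ) 2,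
      (∀ (ξ : lp (fun _ : {n : ℕ // n ∈ idx Γ v0} => ℂ) 2) (n : {n : ℕ // n ∈ idx Γ v0}),
        T ξ n = ∑ᶠ l : {n : ℕ // n ∈ idx Γ v0}, (structConst Γ v0 k (l : ℕ) (n : ℕ) : ℂ) * ξ l) ∧
      ‖T‖ ≤ ((sphereBound Γ v0).toNat : ℝ) ^ 2 := by
  classical
  set S : ℕ := (sphereBound Γ v0).toNat with hSdef
  set C : ℝ := (S : ℝ) ^ 2 with hCdef
  have hC0 : (0:ℝ) ≤ C := by positivity
  set r : {n : ℕ // n ∈ idx Γ v0} → {n : ℕ // n ∈ idx Γ v0} → ℝ :=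
    fun n l => ((structConst Γ v0 k (l : ℕ) (n : ℕ) : ℚ) : ℝ) with hrdef
  have hr0 : ∀ n l, 0 ≤ r n l := fun n l => by
    simpa [hrdef] using (Rat.cast_nonneg (K := ℝ)).mpr (structConst_nonneg hfin k l n)
  have hr1 : ∀ n l, r n l ≤ 1 := fun n l => by
    simpa [hrdef] using (Rat.cast_le (K := ℝ)).mpr (structConst_le_one hfin hk (l:ℕ) (n:ℕ))
  -- row supports
  have hrowfin : ∀ n : {n : ℕ // n ∈ idx Γ v0},
      {l : {n : ℕ // n ∈ idx Γ v0} | structConst Γ v0 k (l:ℕ) (n:ℕ) ≠ 0}.Finite := by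
    intro n
    have : {l : {n : ℕ // n ∈ idx Γ v0} | structConst Γ v0 k (l:ℕ) (n:ℕ) ≠ 0}
        = Subtype.val ⁻¹' {i : ℕ | structConst Γ v0 k i (n:ℕ) ≠ 0} := rfl
    rw [this]
    exact Set.Finite.preimage (Subtype.coe_injective.injOn) (supp_upper_finite hfin k (n:ℕ))
  have hcolfin : ∀ l : {n : ℕ // n ∈ idx Γ v0},
      {n : {n : ℕ // n ∈ idx Γ v0} | structConst Γ v0 k (l:ℕ) (n:ℕ) ≠ 0}.Finite := by
    intro l
    have : {n : {n : ℕ // n ∈ idx Γ v0} | structConst Γ v0 k (l:ℕ) (n:ℕ) ≠ 0}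
        = Subtype.val ⁻¹' {j : ℕ | structConst Γ v0 k (l:ℕ) j ≠ 0} := rfl
    rw [this]
    exact Set.Finite.preimage (Subtype.coe_injective.injOn) (supp_lower_finite hfin k (l:ℕ))
  set rowF : {n : ℕ // n ∈ idx Γ v0} → Finset {n : ℕ // n ∈ idx Γ v0} :=
    fun n => (hrowfin n).toFinset with hrowFdef
  set colF : {n : ℕ // n ∈ idx Γ v0} → Finset {n : ℕ // n ∈ idx Γ v0} :=
    fun l => (hcolfin l).toFinset with hcolFdef
  have hrowcard : ∀ n, (rowF n).card ≤ S ^ 2 := by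
    intro n
    rw [hrowFdef, ← Set.ncard_eq_toFinset_card _ (hrowfin n),
      ← Set.ncard_image_of_injective _ (Subtype.coe_injective)]
    refine le_trans (Set.ncard_le_ncard ?_
      ((supp_upper_finite hfin k (n:ℕ)).subset (fun i hi => hi.2))) (supp_upper hfin hS hk n.2)
    rintro i ⟨⟨i', hi'⟩, hmem, rfl⟩
    exact ⟨hi', hmem⟩
  have hcolcard : ∀ l, (colF l).card ≤ S ^ 2 := by
    intro l
    rw [hcolFdef, ← Set.ncard_eq_toFinset_card _ (hcolfin l),
      ← Set.ncard_image_of_injective _ (Subtype.coe_injective)]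
    refine le_trans (Set.ncard_le_ncard ?_
      ((supp_lower_finite hfin k (l:ℕ)).subset (fun j hj => hj.2))) (supp_lower hfin hS hk l.2)
    rintro j ⟨⟨j', hj'⟩, hmem, rfl⟩
    exact ⟨hj', hmem⟩
  have hrowsum : ∀ n, ∑ l ∈ rowF n, r n l ≤ C := by
    intro n
    calc ∑ l ∈ rowF n, r n l ≤ ∑ _l ∈ rowF n, (1:ℝ) := Finset.sum_le_sum fun l _ => hr1 n l
      _ = ((rowF n).card : ℝ) := by simp
      _ ≤ ((S^2 : ℕ) : ℝ) := by exact_mod_cast hrowcard n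
      _ = C := by push_cast [hCdef]; ring
  have hcolsum : ∀ (l : {n : ℕ // n ∈ idx Γ v0}) (t : Finset {n : ℕ // n ∈ idx Γ v0}),
      ∑ n ∈ t, r n l ≤ C := by
    intro l t
    have heq : ∑ n ∈ t.filter (fun n => n ∈ colF l), r n l = ∑ n ∈ t, r n l := by
      apply Finset.sum_filter_of_ne
      intro n _ hne
      rw [hcolFdef, Set.Finite.mem_toFinset]
      intro h0
      exact hne (by simp [hrdef, h0])
    rw [← heq]
    calc ∑ n ∈ t.filter (fun n => n ∈ colF l), r n l
        ≤ ∑ _n ∈ t.filter (fun n => n ∈ colF l), (1:ℝ) :=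
          Finset.sum_le_sum fun n _ => hr1 n l
      _ = ((t.filter (fun n => n ∈ colF l)).card : ℝ) := by simp
      _ ≤ ((colF l).card : ℝ) := by
          exact_mod_cast Finset.card_le_card (fun n hn => (Finset.mem_filter.mp hn).2)
      _ ≤ ((S^2 : ℕ) : ℝ) := by exact_mod_cast hcolcard l
      _ = C := by push_cast [hCdef]; ring
  -- the raw map
  set Tf : ({n : ℕ // n ∈ idx Γ v0} → ℂ) → {n : ℕ // n ∈ idx Γ v0} → ℂ :=
    fun ξ n => ∑ l ∈ rowF n, ((structConst Γ v0 k (l:ℕ) (n:ℕ) : ℚ) : ℂ) * ξ l with hTfdef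
  have hTf_finsum : ∀ ξ n, Tf ξ n
      = ∑ᶠ l : {n : ℕ // n ∈ idx Γ v0}, ((structConst Γ v0 k (l:ℕ) (n:ℕ) : ℚ) : ℂ) * ξ l := by
    intro ξ n
    rw [hTfdef]
    refine (finsum_eq_finset_sum_of_support_subset _ ?_).symm
    intro l hl
    rw [hrowFdef]
    simp only [Finset.mem_coe, Set.Finite.mem_toFinset, Set.mem_setOf_eq]
    intro h0
    apply hl
    simp [h0]
  -- pointwise Schur bound
  have hnormterm : ∀ (ξ : {n : ℕ // n ∈ idx Γ v0} → ℂ) (n l : {n : ℕ // n ∈ idx Γ v0}),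
      ‖((structConst Γ v0 k (l:ℕ) (n:ℕ) : ℚ) : ℂ) * ξ l‖ = r n l * ‖ξ l‖ := by
    intro ξ n l
    rw [norm_mul, hrdef]
    congr 1
    have : ((structConst Γ v0 k (l:ℕ) (n:ℕ) : ℚ) : ℂ)
        = (((structConst Γ v0 k (l:ℕ) (n:ℕ) : ℚ) : ℝ) : ℂ) := by push_cast; ring
    rw [this, Complex.norm_real]
    exact abs_of_nonneg (hr0 n l)
  have hpt : ∀ (ξ : {n : ℕ // n ∈ idx Γ v0} → ℂ) n,
      ‖Tf ξ n‖ ^ 2 ≤ C * ∑ l ∈ rowF n, r n l * ‖ξ l‖ ^ 2 := by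
    intro ξ n
    have h1 : ‖Tf ξ n‖ ≤ ∑ l ∈ rowF n, r n l * ‖ξ l‖ := by
      rw [hTfdef]
      refine le_trans (norm_sum_le _ _) (le_of_eq ?_)
      exact Finset.sum_congr rfl fun l _ => hnormterm ξ n l
    have h2 : (∑ l ∈ rowF n, r n l * ‖ξ l‖) ^ 2
        ≤ (∑ l ∈ rowF n, r n l) * ∑ l ∈ rowF n, r n l * ‖ξ l‖ ^ 2 := by
      have hcs := Finset.sum_mul_sq_le_sq_mul_sq (rowF n)
        (fun l => Real.sqrt (r n l)) (fun l => Real.sqrt (r n l) * ‖ξ l‖)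
      have e1 : ∀ l ∈ rowF n, Real.sqrt (r n l) * (Real.sqrt (r n l) * ‖ξ l‖)
          = r n l * ‖ξ l‖ := fun l _ => by
        rw [← mul_assoc, Real.mul_self_sqrt (hr0 n l)]
      have e2 : ∀ l ∈ rowF n, Real.sqrt (r n l) ^ 2 = r n l := fun l _ =>
        Real.sq_sqrt (hr0 n l)
      have e3 : ∀ l ∈ rowF n, (Real.sqrt (r n l) * ‖ξ l‖) ^ 2 = r n l * ‖ξ l‖ ^ 2 :=
        fun l _ => by rw [mul_pow, Real.sq_sqrt (hr0 n l)]
      rwa [Finset.sum_congr rfl e1, Finset.sum_congr rfl e2, Finset.sum_congr rfl e3] at hcs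
    calc ‖Tf ξ n‖ ^ 2 ≤ (∑ l ∈ rowF n, r n l * ‖ξ l‖) ^ 2 := by
          apply pow_le_pow_left₀ (norm_nonneg _) h1
      _ ≤ (∑ l ∈ rowF n, r n l) * ∑ l ∈ rowF n, r n l * ‖ξ l‖ ^ 2 := h2
      _ ≤ C * ∑ l ∈ rowF n, r n l * ‖ξ l‖ ^ 2 := by
          apply mul_le_mul_of_nonneg_right (hrowsum n)
          exact Finset.sum_nonneg fun l _ => mul_nonneg (hr0 n l) (by positivity)
  -- partial sum bound
  have hkey : ∀ (ξ : lp (fun _ : {n : ℕ // n ∈ idx Γ v0} => ℂ) 2)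
      (t : Finset {n : ℕ // n ∈ idx Γ v0}),
      ∑ n ∈ t, ‖Tf (⇑ξ) n‖ ^ 2 ≤ (C * ‖ξ‖) ^ 2 := by
    intro ξ t
    set u := t.biUnion rowF with hu
    have hext : ∀ n ∈ t, ∑ l ∈ rowF n, r n l * ‖ξ l‖ ^ 2
        = ∑ l ∈ u, r n l * ‖ξ l‖ ^ 2 := by
      intro n hn
      refine Finset.sum_subset (Finset.subset_biUnion_of_mem rowF hn) ?_
      intro l _ hl
      have : structConst Γ v0 k (l:ℕ) (n:ℕ) = 0 := by
        by_contra h0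
        exact hl (by rw [hrowFdef]; exact (Set.Finite.mem_toFinset _).mpr h0)
      simp [hrdef, this]
    have hlpsum : ∑ l ∈ u, ‖ξ l‖ ^ 2 ≤ ‖ξ‖ ^ 2 := by
      have := lp.sum_rpow_le_norm_rpow (p := 2)
        (E := fun _ : {n : ℕ // n ∈ idx Γ v0} => ℂ) (by norm_num) ξ u
      have h2 : ((2:ℝ≥0∞)).toReal = (2:ℝ) := by norm_num
      rw [h2] at this
      calc ∑ l ∈ u, ‖ξ l‖ ^ 2 = ∑ l ∈ u, ‖ξ l‖ ^ (2:ℝ) := by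
            refine Finset.sum_congr rfl fun l _ => ?_
            rw [← Real.rpow_natCast ‖ξ l‖ 2]; norm_num
        _ ≤ ‖ξ‖ ^ (2:ℝ) := this
        _ = ‖ξ‖ ^ 2 := by rw [← Real.rpow_natCast ‖ξ‖ 2]; norm_num
    calc ∑ n ∈ t, ‖Tf (⇑ξ) n‖ ^ 2
        ≤ ∑ n ∈ t, C * ∑ l ∈ rowF n, r n l * ‖ξ l‖ ^ 2 :=
          Finset.sum_le_sum fun n _ => hpt (⇑ξ) n
      _ = C * ∑ n ∈ t, ∑ l ∈ u, r n l * ‖ξ l‖ ^ 2 := by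
          rw [Finset.mul_sum]
          exact Finset.sum_congr rfl fun n hn => by rw [hext n hn]
      _ = C * ∑ l ∈ u, (∑ n ∈ t, r n l) * ‖ξ l‖ ^ 2 := by
          rw [Finset.sum_comm]
          congr 1
          exact Finset.sum_congr rfl fun l _ => by rw [Finset.sum_mul]
      _ ≤ C * ∑ l ∈ u, C * ‖ξ l‖ ^ 2 := by
          apply mul_le_mul_of_nonneg_left _ hC0
          refine Finset.sum_le_sum fun l _ => ?_
          exact mul_le_mul_of_nonneg_right (hcolsum l t) (by positivity)
      _ = C * (C * ∑ l ∈ u, ‖ξ l‖ ^ 2) := by simp only [Finset.mul_sum]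
      _ ≤ C * (C * ‖ξ‖ ^ 2) := by
          apply mul_le_mul_of_nonneg_left _ hC0
          exact mul_le_mul_of_nonneg_left hlpsum hC0
      _ = (C * ‖ξ‖) ^ 2 := by ring
  -- membership in lp
  have hrpow : ∀ (f : {n : ℕ // n ∈ idx Γ v0} → ℂ) (m : {n : ℕ // n ∈ idx Γ v0}),
      ‖f m‖ ^ ((2:ℝ≥0∞)).toReal = ‖f m‖ ^ 2 := by
    intro f m
    have h2 : ((2:ℝ≥0∞)).toReal = (2:ℝ) := by norm_num
    rw [h2, ← Real.rpow_natCast ‖f m‖ 2]; norm_num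
  have hmem : ∀ ξ : lp (fun _ : {n : ℕ // n ∈ idx Γ v0} => ℂ) 2,
      Memℓp (Tf (⇑ξ)) 2 := by
    intro ξ
    refine memℓp_gen' (C := (C * ‖ξ‖) ^ 2) ?_
    intro s
    calc ∑ m ∈ s, ‖Tf (⇑ξ) m‖ ^ ((2:ℝ≥0∞)).toReal
        = ∑ m ∈ s, ‖Tf (⇑ξ) m‖ ^ 2 := Finset.sum_congr rfl fun m _ => hrpow _ m
      _ ≤ (C * ‖ξ‖) ^ 2 := hkey ξ s
  -- linear map
  set L : lp (fun _ : {n : ℕ // n ∈ idx Γ v0} => ℂ) 2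
      →ₗ[ℂ] lp (fun _ : {n : ℕ // n ∈ idx Γ v0} => ℂ) 2 :=
    { toFun := fun ξ => ⟨Tf (⇑ξ), hmem ξ⟩
      map_add' := by
        intro ξ η
        ext n
        simp only [hTfdef, lp.coeFn_add, Pi.add_apply, mul_add, Finset.sum_add_distrib]
      map_smul' := by
        intro c ξ
        ext n
        simp only [hTfdef, lp.coeFn_smul, Pi.smul_apply, smul_eq_mul, RingHom.id_apply,
          Finset.mul_sum]
        exact Finset.sum_congr rfl fun l _ => by ring } with hLdef
  have hLapply : ∀ (ξ : lp (fun _ : {n : ℕ // n ∈ idx Γ v0} => ℂ) 2) n,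
      L ξ n = Tf (⇑ξ) n := fun ξ n => rfl
  have hLbound : ∀ ξ, ‖L ξ‖ ≤ C * ‖ξ‖ := by
    intro ξ
    refine lp.norm_le_of_forall_sum_le (p := 2) (by norm_num)
      (mul_nonneg hC0 (norm_nonneg _)) ?_
    intro s
    calc ∑ m ∈ s, ‖L ξ m‖ ^ ((2:ℝ≥0∞)).toReal
        = ∑ m ∈ s, ‖Tf (⇑ξ) m‖ ^ 2 := Finset.sum_congr rfl fun m _ => by
          rw [hLapply]; exact hrpow _ m
      _ ≤ (C * ‖ξ‖) ^ 2 := hkey ξ s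
      _ = (C * ‖ξ‖) ^ ((2:ℝ≥0∞)).toReal := by
          rw [show ((2:ℝ≥0∞)).toReal = (2:ℝ) by norm_num,
            ← Real.rpow_natCast (C * ‖ξ‖) 2]
          norm_num
  refine ⟨L.mkContinuous C hLbound, ?_, ?_⟩
  · intro ξ n
    have : (L.mkContinuous C hLbound) ξ n = L ξ n := rfl
    rw [this, hLapply, hTf_finsum]
  · exact L.mkContinuous_norm_le hC0 hLbound

end Aux

/-- for a pointed infinite graph with `S(Γ) < ∞`, each transition matrix
`P_k` gives a bounded operator on `ℓ²(I(Γ))` with `‖P_k‖ ≤ S(Γ)²`; in particular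
`|Supp^j(k)| ≤ S(Γ)²` and `|Supp_i(k)| ≤ S(Γ)²`. -/
theorem transition_matrix_uniformly_bounded {V : Type*} [Infinite V]
    (Γ : SimpleGraph V) (v0 : V)
    (hconn : Γ.Connected) (hfin : ∀ (v : V) (n : ℕ), (gsphere Γ v n).Finite)
    (hne : ∀ v : V, ∀ n ∈ idx Γ v0, (gsphere Γ v n).Nonempty)
    (hS : sphereBound Γ v0 < ⊤)
    (k : ℕ) (hk : k ∈ idx Γ v0) :
    (∃ T : lp (fun _ : {n : ℕ // n ∈ idx Γ v0} => ℂ) 2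
        →L[ℂ] lp (fun _ : {n : ℕ // n ∈ idx Γ v0} => ℂ) 2,
      (∀ (ξ : lp (fun _ : {n : ℕ // n ∈ idx Γ v0} => ℂ) 2) (n : {n : ℕ // n ∈ idx Γ v0}),
        T ξ n = ∑ᶠ l : {n : ℕ // n ∈ idx Γ v0}, (structConst Γ v0 k (l : ℕ) (n : ℕ) : ℂ) * ξ l) ∧
      ‖T‖ ≤ ((sphereBound Γ v0).toNat : ℝ) ^ 2) ∧
    (∀ j ∈ idx Γ v0,
      ({i | i ∈ idx Γ v0 ∧ structConst Γ v0 k i j ≠ 0}).ncard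
        ≤ (sphereBound Γ v0).toNat ^ 2) ∧
    (∀ i ∈ idx Γ v0,
      ({j | j ∈ idx Γ v0 ∧ structConst Γ v0 k i j ≠ 0}).ncard
        ≤ (sphereBound Γ v0).toNat ^ 2) := by
  refine ⟨exists_bounded_op hfin hS k hk, fun j hj => supp_upper hfin hS hk hj,
    fun i hi => supp_lower hfin hS hk hi⟩
end
end
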